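/- There is a universal constant C > 0 such that for all a, b in the closed unit disc of ℂ, the integral over the open unit disc 𝔻 of |a − b| / (|s − a|·|s − b|) with respect to Lebesgue measure ds is at most C·φ(|a − b|), where φ(x) = x·max(−ln x, 1), φ(0)=0. -/

import Mathlib

open MeasureTheory

noncomputable def phi (x : ℝ) : ℝ := x * max (-Real.log x) 1

/-!
Write `d = |a - b|`, `x = |s - a|`, `y = |s - b|`, so that `d ≤ x + y` and `x, y ≤ 2` on the disc.
With `R = d / 2` the radial kernel `k(r) = 2 / r` for `r ≤ R`, `k(r) = R / r²` for `R < r ≤ 2`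
satisfies `d / (x y) ≤ k(x) + k(y)`: if `x ≤ R` then `y ≥ R`, so `d / (x y) ≤ 2 / x`;
otherwise both lie in `(R, 2]` and `2 / (x y) ≤ 1 / x² + 1 / y²`.
In polar coordinates `∫_ℂ k(|z - c|) dz = 2π (2R + R log (2 / R))`, which is `O(φ(d))`.
-/

open Set Real

noncomputable def poleKernel (R S r : ℝ) : ℝ :=
  (Iic R).indicator (fun t => 2 * t⁻¹) r + (Ioc R S).indicator (fun t => R * (t ^ 2)⁻¹) r

namespace Complex

variable {F : Type*} [NormedAddCommGroup F] [NormedSpace ℝ F]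

theorem integrable_fun_norm_iff {f : ℝ → F} :
    Integrable (fun z : ℂ => f ‖z‖) ↔ IntegrableOn (fun r => r • f r) (Ioi 0) := by
  simpa [finrank_real_complex] using integrable_fun_norm_addHaar (volume : Measure ℂ) (f := f)

theorem integral_fun_norm (f : ℝ → F) :
    ∫ z : ℂ, f ‖z‖ = (2 * π) • ∫ r in Ioi (0 : ℝ), r • f r := by
  rw [integral_fun_norm_addHaar volume f]
  simp only [finrank_real_complex, measureReal_def, Complex.volume_ball]
  simp [mul_smul, ← Nat.cast_smul_eq_nsmul ℝ]

end Complex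

section poleKernel

variable {R S r : ℝ}

lemma poleKernel_nonneg (hR : 0 ≤ R) (hr : 0 ≤ r) : 0 ≤ poleKernel R S r := by
  simp only [poleKernel, indicator_apply]
  split_ifs <;> positivity

lemma poleKernel_of_le (hr : r ≤ R) : poleKernel R S r = 2 * r⁻¹ := by
  simp [poleKernel, hr, hr.not_gt]

lemma poleKernel_of_lt_of_le (hRr : R < r) (hrS : r ≤ S) : poleKernel R S r = R * (r ^ 2)⁻¹ := by
  simp [poleKernel, hRr, hRr.not_ge, hrS]

lemma two_mul_div_mul_le_poleKernel_add (hR : 0 < R) {x y : ℝ} (hx : 0 ≤ x) (hy : 0 ≤ y)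
    (hxS : x ≤ S) (hyS : y ≤ S) (hxy : 2 * R ≤ x + y) :
    2 * R / (x * y) ≤ poleKernel R S x + poleKernel R S y := by
  wlog hle : x ≤ y generalizing x y
  · rw [mul_comm x y, add_comm]
    exact this hy hx hyS hxS (by linarith) (by linarith)
  have hRy : R ≤ y := by linarith
  have hy0 : 0 < y := hR.trans_le hRy
  rcases le_or_gt x R with hxR | hRx
  · calc 2 * R / (x * y) = 2 * x⁻¹ * (R / y) := by ring
      _ ≤ 2 * x⁻¹ := mul_le_of_le_one_right (by positivity) (div_le_one_of_le₀ hRy hy0.le)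
      _ ≤ poleKernel R S x + poleKernel R S y := by
        linarith [poleKernel_of_le (S := S) hxR, poleKernel_nonneg (S := S) hR.le hy]
  · rw [poleKernel_of_lt_of_le hRx hxS, poleKernel_of_lt_of_le (hRx.trans_le hle) hyS]
    calc 2 * R / (x * y) = R * (x⁻¹ ^ 2 + y⁻¹ ^ 2) - R * (x⁻¹ - y⁻¹) ^ 2 := by ring
      _ ≤ R * (x ^ 2)⁻¹ + R * (y ^ 2)⁻¹ := by
        simp only [inv_pow]
        nlinarith [mul_nonneg hR.le (sq_nonneg (x⁻¹ - y⁻¹))]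

lemma eqOn_mul_poleKernel :
    EqOn (fun r => r * poleKernel R S r)
      (fun r => (Ioc 0 R).indicator (fun _ => 2) r + (Ioc R S).indicator (fun t => R * t⁻¹) r)
      (Ioi 0) := by
  intro r (hr : 0 < r)
  simp only [poleKernel, mul_add, indicator_apply, mem_Iic, mem_Ioc, hr, true_and]
  split_ifs <;> field_simp <;> simp

lemma integrable_indicator_Ioc_const (c : ℝ) : Integrable ((Ioc 0 R).indicator fun _ => c) :=
  (integrable_indicator_iff measurableSet_Ioc).2 (integrableOn_const (by simp))

lemma integrable_indicator_Ioc_mul_inv (hR : 0 < R) :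
    Integrable ((Ioc R S).indicator fun t => R * t⁻¹) := by
  rw [integrable_indicator_iff measurableSet_Ioc]
  refine (ContinuousOn.integrableOn_Icc ?_).mono_set Ioc_subset_Icc_self
  exact continuousOn_const.mul (continuousOn_inv₀.mono fun t ht => (hR.trans_le ht.1).ne')

lemma integrableOn_mul_poleKernel (hR : 0 < R) :
    IntegrableOn (fun r => r * poleKernel R S r) (Ioi 0) :=
  ((integrable_indicator_Ioc_const 2).add (integrable_indicator_Ioc_mul_inv hR)).integrableOn
    |>.congr_fun eqOn_mul_poleKernel.symm measurableSet_Ioi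

lemma integral_mul_poleKernel (hR : 0 < R) (hRS : R ≤ S) :
    ∫ r in Ioi 0, r * poleKernel R S r = 2 * R + R * log (S / R) := by
  rw [setIntegral_congr_fun measurableSet_Ioi eqOn_mul_poleKernel,
    integral_add (integrable_indicator_Ioc_const 2).integrableOn
      (integrable_indicator_Ioc_mul_inv hR).integrableOn,
    setIntegral_indicator measurableSet_Ioc, setIntegral_indicator measurableSet_Ioc,
    inter_eq_right.2 Ioc_subset_Ioi_self,
    inter_eq_right.2 (Ioc_subset_Ioi_self.trans (Ioi_subset_Ioi hR.le)),
    ← intervalIntegral.integral_of_le hRS, intervalIntegral.integral_const_mul,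
    integral_inv_of_pos hR (hR.trans_le hRS)]
  simp [hR.le]
  ring

lemma integrable_poleKernel_norm_sub (hR : 0 < R) (c : ℂ) :
    Integrable (fun z : ℂ => poleKernel R S ‖z - c‖) :=
  (Complex.integrable_fun_norm_iff.2 (integrableOn_mul_poleKernel hR)).comp_sub_right c

lemma integral_poleKernel_norm_sub (hR : 0 < R) (hRS : R ≤ S) (c : ℂ) :
    ∫ z : ℂ, poleKernel R S ‖z - c‖ = 2 * π * (2 * R + R * log (S / R)) := by
  rw [integral_sub_right_eq_self (fun z => poleKernel R S ‖z‖) c, Complex.integral_fun_norm]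
  simp [integral_mul_poleKernel hR hRS]

end poleKernel

lemma div_norm_sub_mul_le_poleKernel_add {ρ : ℝ} {a b s : ℂ} (ha : ‖a‖ ≤ ρ) (hb : ‖b‖ ≤ ρ)
    (hs : ‖s‖ ≤ ρ) (hab : 0 < ‖a - b‖) :
    ‖a - b‖ / (‖s - a‖ * ‖s - b‖) ≤
      poleKernel (‖a - b‖ / 2) (2 * ρ) ‖s - a‖ + poleKernel (‖a - b‖ / 2) (2 * ρ) ‖s - b‖ := by
  have hdiam c (hc : ‖c‖ ≤ ρ) : ‖s - c‖ ≤ 2 * ρ := by linarith [norm_sub_le s c]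
  have htri : ‖a - b‖ ≤ ‖s - a‖ + ‖s - b‖ := by
    simpa only [norm_sub_rev a s] using norm_sub_le_norm_sub_add_norm_sub a s b
  simpa only [mul_div_cancel₀ ‖a - b‖ (two_ne_zero : (2 : ℝ) ≠ 0)] using
    two_mul_div_mul_le_poleKernel_add (half_pos hab) (norm_nonneg _) (norm_nonneg _)
      (hdiam a ha) (hdiam b hb) (by linarith)

lemma mul_two_add_log_le_phi {d : ℝ} (hd : 0 < d) : d * (2 + log (4 / d)) ≤ 6 * phi d := by
  have hlog4 : log 4 ≤ 3 := by linarith [log_le_sub_one_of_pos (show (0 : ℝ) < 4 by norm_num)]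
  have hmax := le_max_left (-log d) 1
  have hone := le_max_right (-log d) 1
  rw [phi, log_div (by norm_num) hd.ne', ← mul_assoc, mul_comm 6 d, mul_assoc]
  exact mul_le_mul_of_nonneg_left (by linarith) hd.le

theorem disc_integral_phi_bound :
    ∃ C : ℝ, 0 < C ∧ ∀ a b : ℂ, ‖a‖ ≤ 1 → ‖b‖ ≤ 1 →
      (∫ s in {s : ℂ | ‖s‖ < 1},
          ‖a - b‖ / (‖s - a‖ * ‖s - b‖))
        ≤ C * phi ‖a - b‖ := by
  refine ⟨12 * π, by positivity, fun a b ha hb => ?_⟩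
  set d := ‖a - b‖
  rcases (show 0 ≤ d from norm_nonneg _).eq_or_lt with hd | hd
  · simp [← hd, phi]
  have hR : 0 < d / 2 := half_pos hd
  have hRS : d / 2 ≤ 2 * 1 := by linarith [norm_sub_le a b, norm_neg b]
  set G := fun s : ℂ => poleKernel (d / 2) (2 * 1) ‖s - a‖ + poleKernel (d / 2) (2 * 1) ‖s - b‖
  have hG : Integrable G :=
    (integrable_poleKernel_norm_sub hR a).add (integrable_poleKernel_norm_sub hR b)
  calc ∫ s in {s : ℂ | ‖s‖ < 1}, d / (‖s - a‖ * ‖s - b‖)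
      ≤ ∫ s in {s : ℂ | ‖s‖ < 1}, G s :=
        integral_mono_of_nonneg (ae_of_all _ fun _ => by positivity) hG.restrict
          ((ae_restrict_iff' (measurableSet_lt measurable_norm measurable_const)).2
            (ae_of_all _ fun s hs => div_norm_sub_mul_le_poleKernel_add ha hb hs.le hd))
    _ ≤ ∫ s, G s := setIntegral_le_integral hG <| ae_of_all _ fun s => add_nonneg
        (poleKernel_nonneg hR.le (norm_nonneg _)) (poleKernel_nonneg hR.le (norm_nonneg _))
    _ = 2 * π * (d * (2 + log (4 / d))) := by
      rw [integral_add (integrable_poleKernel_norm_sub hR a) (integrable_poleKernel_norm_sub hR b),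
        integral_poleKernel_norm_sub hR hRS, integral_poleKernel_norm_sub hR hRS]
      ring_nf
    _ ≤ 2 * π * (6 * phi d) := mul_le_mul_of_nonneg_left (mul_two_add_log_le_phi hd) (by positivity)
    _ = 12 * π * phi d := by ring
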